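/- arXiv:1906.05884 — 3 statements merged into one kernel-verified Lean document; each statement's English description precedes it below -/
import Mathlib

section
/- Suppose P_{aa} ≥ P_{bb} ≥ 0, P_{ab} ≥ 0, D := P_{aa}P_{bb} − P_{ab}² > 0, and x_a, x_b satisfy −P_{ab} x_a + P_{bb} x_b ≥ c/R and P_{aa} x_a − P_{ab} x_b ≥ c/R. Then x_a ≥ (c/R)·(P_{bb} + P_{ab})/D and x_b ≥ (c/R)·(P_{aa} + P_{ab})/D. That is, the intersection point of the two binding constraints is the coordinatewise minimum of the feasible region. -/
/-- Any feasible solution of the two incentive constraints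
dominates the intersection point coordinatewise:
`x_a ≥ (c/R)(P_bb + P_ab)/D` and `x_b ≥ (c/R)(P_aa + P_ab)/D`. -/
theorem intersection_is_coordinatewise_min
    (Paa Pab Pbb xa xb c R : ℝ)
    (horder : Paa ≥ Pbb) (hPbb0 : 0 ≤ Pbb) (hPab0 : 0 ≤ Pab)
    (hD : Paa * Pbb - Pab ^ 2 > 0)
    (hc : 0 < c) (hR : 0 < R)
    (h1 : -Pab * xa + Pbb * xb ≥ c / R)
    (h2 : Paa * xa - Pab * xb ≥ c / R) :
    xa ≥ (c / R) * (Pbb + Pab) / (Paa * Pbb - Pab ^ 2) ∧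
    xb ≥ (c / R) * (Paa + Pab) / (Paa * Pbb - Pab ^ 2) := by
  constructor
  · rw [ge_iff_le, div_le_iff₀ hD]
    nlinarith [mul_le_mul_of_nonneg_left h2 hPbb0, mul_le_mul_of_nonneg_left h1 hPab0]
  · rw [ge_iff_le, div_le_iff₀ hD]
    have hPaa0 : 0 ≤ Paa := le_trans hPbb0 horder
    nlinarith [mul_le_mul_of_nonneg_left h1 hPaa0, mul_le_mul_of_nonneg_left h2 hPab0]
end

section
/- Whenever a DSIC ROS mechanism exists (P_{bb} − P_{ab} ≥ c/R), a DSIC RSS mechanism exists (P(a|a) − P_a ≥ c/R), because (P_{aa}P_{bb} − P_{ab}²)/P_a ≥ P_{bb} − P_{ab} whenever P_{aa} ≥ P_{bb} and P_a = P_{aa} + P_{ab} > 0; moreover the inequality is strict when P_{aa} > P_{bb} and P_{ab} > 0. -/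
/-- `(P_aa P_bb − P_ab²)/P_a ≥ P_bb − P_ab` whenever
`P_aa ≥ P_bb` and `P_a = P_aa + P_ab > 0`; strict when `P_aa > P_bb` and
`P_ab > 0`. Hence whenever ROS is feasible (`P_bb − P_ab ≥ c/R`), RSS is
feasible (`(P_aa P_bb − P_ab²)/P_a ≥ c/R`). -/
theorem ros_feasible_implies_rss_feasible
    (Paa Pab Pbb Pa : ℝ)
    (hPaa0 : 0 ≤ Paa) (hPbb0 : 0 ≤ Pbb) (hPab0 : 0 ≤ Pab)
    (horder : Paa ≥ Pbb)
    (hPa : Pa = Paa + Pab) (hPapos : 0 < Pa) :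
    ((Paa * Pbb - Pab ^ 2) / Pa ≥ Pbb - Pab) ∧
    (Paa > Pbb → 0 < Pab → (Paa * Pbb - Pab ^ 2) / Pa > Pbb - Pab) ∧
    (∀ c R : ℝ, 0 < c → 0 < R → Pbb - Pab ≥ c / R →
      (Paa * Pbb - Pab ^ 2) / Pa ≥ c / R) := by
  have h1 : (Paa * Pbb - Pab ^ 2) / Pa ≥ Pbb - Pab := by
    rw [ge_iff_le, le_div_iff₀ hPapos]
    nlinarith
  refine ⟨h1, ?_, fun c R _ _ h => le_trans h h1⟩
  intro hlt hab
  rw [gt_iff_lt, lt_div_iff₀ hPapos]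
  nlinarith
end

section
/- Suppose P_a > P_b (equivalently P_{aa} > P_{bb}), P_{ab} > 0, and D = P_{aa}P_{bb} − P_{ab}² > 0. Then there exist c, R > 0 such that P_{bb} − P_{ab} < c/R ≤ D/P_a, where P_a = P_{aa} + P_{ab}. Hence there are parameter regimes where the optimal DSIC RSS mechanism exists but no DSIC ROS mechanism exists. -/
/-- When `P_aa > P_bb`, `P_ab > 0` and
`D = P_aa P_bb − P_ab² > 0`, there exist `c, R > 0` with
`P_bb − P_ab < c/R ≤ D/P_a` (`P_a = P_aa + P_ab`): the optimal DSIC RSS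
mechanism exists while no DSIC ROS mechanism does. -/
theorem rss_feasible_ros_infeasible_regime
    (Paa Pab Pbb Pa : ℝ)
    (hPbb0 : 0 ≤ Pbb)
    (horder : Paa > Pbb) (hPab : 0 < Pab)
    (hD : Paa * Pbb - Pab ^ 2 > 0)
    (hPa : Pa = Paa + Pab) :
    ∃ c R : ℝ, 0 < c ∧ 0 < R ∧
      Pbb - Pab < c / R ∧ c / R ≤ (Paa * Pbb - Pab ^ 2) / Pa := by
  have hPaa : 0 < Paa := lt_of_le_of_lt hPbb0 horder
  have hPapos : 0 < Pa := by rw [hPa]; positivity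
  refine ⟨(Paa * Pbb - Pab ^ 2) / Pa, 1, by positivity, one_pos, ?_, by rw [div_one]⟩
  rw [div_one, lt_div_iff₀ hPapos, hPa]
  nlinarith
end
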